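/- Suppose the $\sigma^{\downarrow}$-siblings $\{\sigma^{\downarrow}(2k-1),\sigma^{\downarrow}(2k)\}$ have the form $\{\epsilon p(i),\epsilon p(j)\}$ with $i\neq j$. Then $|i-j|=1$, so $i$ and $j$ have different parities. The same holds for siblings of the form $\{\bar\epsilon p(i),\bar\epsilon p(j)\}$. -/

import Mathlib

open scoped Classical

noncomputable section

/-- The posterior term: `(k, false) ↦ ε·p(k)` and `(k, true) ↦ (1-ε)·p(k)`. -/
def pt (N : ℕ) (p : Fin N → ℝ) (ε : ℝ) : Fin N × Bool → ℝ :=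
  fun x => (if x.2 then 1 - ε else ε) * p x.1

/-- The set `Π` of all `2N` posterior terms. -/
def PiAll (N : ℕ) (p : Fin N → ℝ) (ε : ℝ) : Set ℝ := Set.range (pt N p ε)

/-- The posterior set `Π_A^1 = {(1-ε)p(k) : k ∈ A} ∪ {ε p(k) : k ∉ A}`. -/
def Pi1 (N : ℕ) (p : Fin N → ℝ) (ε : ℝ) (A : Finset (Fin N)) : Set ℝ :=
  {x | ∃ k : Fin N, (k ∈ A ∧ x = pt N p ε (k, true)) ∨ (k ∉ A ∧ x = pt N p ε (k, false))}

/-- The posterior set `Π_A^0 = Π \ Π_A^1`. -/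
def Pi0 (N : ℕ) (p : Fin N → ℝ) (ε : ℝ) (A : Finset (Fin N)) : Set ℝ :=
  PiAll N p ε \ Pi1 N p ε A

/-- The posterior set `Π_A^y`. -/
def PiY (N : ℕ) (p : Fin N → ℝ) (ε : ℝ) (A : Finset (Fin N)) (y : Bool) : Set ℝ :=
  if y then Pi1 N p ε A else Pi0 N p ε A

/-- Index `2k-1` (1-based), i.e. `2k` (0-based), of the `k`-th σ-sibling pair. -/
def i0 {N : ℕ} (k : Fin N) : Fin (2 * N) := ⟨2 * k.1, by have := k.isLt; omega⟩

/-- Index `2k` (1-based), i.e. `2k+1` (0-based), of the `k`-th σ-sibling pair. -/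
def i1 {N : ℕ} (k : Fin N) : Fin (2 * N) := ⟨2 * k.1 + 1, by have := k.isLt; omega⟩

/-- `A` and the bijection `σ : [2N] → Π` are posterior-respecting: no σ-sibling pair
`{σ(2k-1), σ(2k)}` is contained in a single posterior set `Π_A^y`. -/
def PR (N : ℕ) (p : Fin N → ℝ) (ε : ℝ) (σ : Fin (2 * N) → ℝ) (A : Finset (Fin N)) : Prop :=
  ∀ (k : Fin N) (y : Bool), ¬(({σ (i0 k), σ (i1 k)} : Set ℝ) ⊆ PiY N p ε A y)

/-- The graph `𝒢_σ` on the posterior terms (identified with their indices in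
`Fin N × Bool` via the injection `pt`), with posterior-sibling edges (same `k`)
and σ-sibling edges (`{σ(2k-1), σ(2k)}`). -/
def Gsig (N : ℕ) (p : Fin N → ℝ) (ε : ℝ) (σ : Fin (2 * N) → ℝ) :
    SimpleGraph (Fin N × Bool) :=
  SimpleGraph.fromRel (fun u v => u.1 = v.1 ∨ ∃ k : Fin N,
    ({pt N p ε u, pt N p ε v} : Set ℝ) = {σ (i0 k), σ (i1 k)})

/-- The zigzag partition: indices that are odd in the 1-based ordering
(`k.1` even in the 0-based ordering). -/
def AZZ (N : ℕ) : Finset (Fin N) := Finset.univ.filter (fun k => k.1 % 2 = 0)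


/-! If two values of a strictly decreasing subsequence `f` of a strictly decreasing enumeration
`σ` occupy consecutive positions of `σ`, their indices in `f` are consecutive: any value of `f`
with an index strictly between them would have to sit strictly between two consecutive positions.
Both `m ↦ ε p(m)` and `m ↦ (1 - ε) p(m)` are such subsequences of `σ↓`. -/

theorem StrictAnti.val_eq_succ_of_consecutive {α : Type*} [LinearOrder α] {m n : ℕ}
    {σ : Fin n → α} {f : Fin m → α} (hσ : StrictAnti σ) (hf : StrictAnti f)
    (hrange : Set.range f ⊆ Set.range σ) {a b : Fin n} (hab : b.1 = a.1 + 1) {i j : Fin m}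
    (hi : σ a = f i) (hj : σ b = f j) : j.1 = i.1 + 1 := by
  have hij : i < j := hf.lt_iff_gt.mp (hi ▸ hj ▸ hσ (Fin.lt_def.mpr (by omega)))
  by_contra hne
  have hmid : i.1 + 1 < m := by omega
  obtain ⟨c, hc⟩ := hrange ⟨⟨i.1 + 1, hmid⟩, rfl⟩
  have hac : a < c := hσ.lt_iff_gt.mp (hc ▸ hi ▸ hf (Fin.lt_def.mpr (Nat.lt_succ_self _)))
  have hcb : c < b :=
    hσ.lt_iff_gt.mp (hc ▸ hj ▸ hf (Fin.lt_def.mpr (show i.1 + 1 < j.1 by omega)))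
  rw [Fin.lt_def] at hac hcb
  omega

theorem pt_strictAnti {N : ℕ} {p : Fin N → ℝ} (hpanti : StrictAnti p) {ε : ℝ} (hε0 : 0 < ε)
    (hε : ε < 1 / 2) (b : Bool) : StrictAnti fun m => pt N p ε (m, b) := by
  have hcoef : 0 < if b then 1 - ε else ε := by split_ifs <;> linarith
  exact fun _ _ h => mul_lt_mul_of_pos_left (hpanti h) hcoef

theorem sibling_pair_adjacent {N : ℕ} {p : Fin N → ℝ} (hpanti : StrictAnti p) {ε : ℝ}
    (hε0 : 0 < ε) (hε : ε < 1 / 2) {σd : Fin (2 * N) → ℝ} (hσd : StrictAnti σd)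
    (hσr : Set.range σd = PiAll N p ε) (b : Bool) {k i j : Fin N}
    (h : ({σd (i0 k), σd (i1 k)} : Set ℝ) = {pt N p ε (i, b), pt N p ε (j, b)}) :
    i.1 + 1 = j.1 ∨ j.1 + 1 = i.1 := by
  have hf := pt_strictAnti hpanti hε0 hε b
  have hrange : Set.range (fun m => pt N p ε (m, b)) ⊆ Set.range σd :=
    hσr ▸ Set.range_subset_iff.mpr fun m => ⟨(m, b), rfl⟩
  have hsucc : (i1 k).1 = (i0 k).1 + 1 := rfl
  rcases Set.pair_eq_pair_iff.mp h with ⟨hi, hj⟩ | ⟨hj, hi⟩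
  · exact .inl (hσd.val_eq_succ_of_consecutive hf hrange hsucc hi hj).symm
  · exact .inr (hσd.val_eq_succ_of_consecutive hf hrange hsucc hj hi).symm

theorem stmt9_general (N : ℕ) (p : Fin N → ℝ) (hpanti : StrictAnti p)
    (ε : ℝ) (hε0 : 0 < ε) (hε : ε < 1 / 2)
    (σd : Fin (2 * N) → ℝ) (hσd : StrictAnti σd) (hσr : Set.range σd = PiAll N p ε) :
    (∀ k i j : Fin N,
      ({σd (i0 k), σd (i1 k)} : Set ℝ) = {pt N p ε (i, false), pt N p ε (j, false)} →
      i ≠ j → (i.1 + 1 = j.1 ∨ j.1 + 1 = i.1) ∧ i.1 % 2 ≠ j.1 % 2) ∧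
    (∀ k i j : Fin N,
      ({σd (i0 k), σd (i1 k)} : Set ℝ) = {pt N p ε (i, true), pt N p ε (j, true)} →
      i ≠ j → (i.1 + 1 = j.1 ∨ j.1 + 1 = i.1) ∧ i.1 % 2 ≠ j.1 % 2) := by
  have adjacent_and_parity (b : Bool) (k i j : Fin N)
      (h : ({σd (i0 k), σd (i1 k)} : Set ℝ) = {pt N p ε (i, b), pt N p ε (j, b)}) :
      (i.1 + 1 = j.1 ∨ j.1 + 1 = i.1) ∧ i.1 % 2 ≠ j.1 % 2 := by
    have hadj := sibling_pair_adjacent hpanti hε0 hε hσd hσr b h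
    exact ⟨hadj, by omega⟩
  exact ⟨fun k i j h _ => adjacent_and_parity false k i j h,
    fun k i j h _ => adjacent_and_parity true k i j h⟩

/-- **(Statement 9.)** If a σ↓-sibling pair has the form `{ε p(i), ε p(j)}` with
`i ≠ j`, then `|i - j| = 1`, so `i` and `j` have different parities; the same holds
for pairs of the form `{(1-ε) p(i), (1-ε) p(j)}`. -/
theorem stmt9 (N : ℕ) (hN : 1 ≤ N) (p : Fin N → ℝ) (hp : ∀ k, 0 < p k)
    (hsum : ∑ k, p k = 1) (hpanti : StrictAnti p)
    (ε : ℝ) (hε0 : 0 < ε) (hε : ε < 1 / 2)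
    (hinj : Function.Injective (pt N p ε))
    (σd : Fin (2 * N) → ℝ) (hσd : StrictAnti σd) (hσr : Set.range σd = PiAll N p ε) :
    (∀ k i j : Fin N,
      ({σd (i0 k), σd (i1 k)} : Set ℝ) = {pt N p ε (i, false), pt N p ε (j, false)} →
      i ≠ j → (i.1 + 1 = j.1 ∨ j.1 + 1 = i.1) ∧ i.1 % 2 ≠ j.1 % 2) ∧
    (∀ k i j : Fin N,
      ({σd (i0 k), σd (i1 k)} : Set ℝ) = {pt N p ε (i, true), pt N p ε (j, true)} →
      i ≠ j → (i.1 + 1 = j.1 ∨ j.1 + 1 = i.1) ∧ i.1 % 2 ≠ j.1 % 2) :=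
  stmt9_general N p hpanti ε hε0 hε σd hσd hσr

end
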